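/- arXiv:2103.13973 — 2 statements merged into one kernel-verified Lean document; each statement's English description precedes it below -/
import Mathlib

section
/- Let Φ be a map on D×D complex matrices given in Kraus form Φ(X) = ∑_k E_k X E_kᴴ for a finite family of D×D complex matrices (E_k) satisfying the completeness relation ∑_k E_kᴴ E_k = I. Then for any two density matrices ρ and σ, ‖Φ(ρ) − Φ(σ)‖₁ ≤ ‖ρ − σ‖₁; i.e., a completely positive trace-preserving map is a contraction with respect to the trace distance. -/
open Matrix ComplexOrder

/-- The trace norm `‖A‖₁ = tr √(AᴴA)` of a complex square matrix. -/
noncomputable def traceNorm {n : Type*} [Fintype n] [DecidableEq n]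
    (A : Matrix n n ℂ) : ℝ :=
  (((Matrix.posSemidef_conjTranspose_mul_self A).1.eigenvectorUnitary.1 *
      diagonal (((↑) : ℝ → ℂ) ∘ (√·) ∘ (Matrix.posSemidef_conjTranspose_mul_self A).1.eigenvalues) *
      (star (Matrix.posSemidef_conjTranspose_mul_self A).1.eigenvectorUnitary : Matrix n n ℂ)).trace).re

/-- A density matrix: positive semidefinite with trace 1. -/
def IsDensity {n : Type*} [Fintype n] (ρ : Matrix n n ℂ) : Prop :=
  ρ.PosSemidef ∧ ρ.trace = 1

/-! Write `ρ - σ = P - Q` with `P, Q ≥ 0` and `tr P + tr Q = ‖ρ - σ‖₁` (positive and negative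
parts). A Kraus map preserves positivity and trace, so `Φ ρ - Φ σ = Φ P - Φ Q` is again a
difference of positive matrices with the same total trace. For any such difference,
`‖P' - Q'‖₁ = tr (S (P' - Q'))` with `S` the sign of `P' - Q'`, and `-1 ≤ S ≤ 1` gives
`tr (S P') ≤ tr P'` and `-tr (S Q') ≤ tr Q'`. -/

namespace Matrix

open scoped MatrixOrder

variable {m n : Type*} [Fintype n]

section Hermitian

variable [DecidableEq n]

lemma IsHermitian.trace_cfc {A : Matrix n n ℂ} (hA : A.IsHermitian) (f : ℝ → ℝ) :
    (cfc f A).trace = ∑ i, (f (hA.eigenvalues i) : ℂ) := by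
  rw [hA.cfc_eq, IsHermitian.cfc, Unitary.conjStarAlgAut_apply, trace_mul_cycle,
    Unitary.coe_star_mul_self, one_mul, trace_diagonal]
  rfl

lemma traceNorm_eq_re_trace_cfc_sqrt (A : Matrix n n ℂ) :
    traceNorm A = (cfc Real.sqrt (Aᴴ * A)).trace.re := by
  rw [(posSemidef_conjTranspose_mul_self A).1.cfc_eq, IsHermitian.cfc,
    Unitary.conjStarAlgAut_apply]
  rfl

lemma IsHermitian.traceNorm_eq_sum_abs_eigenvalues {A : Matrix n n ℂ} (hA : A.IsHermitian) :
    traceNorm A = ∑ i, |hA.eigenvalues i| := by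
  have hsq : Aᴴ * A = cfc (· ^ 2 : ℝ → ℝ) A := by
    rw [cfc_pow_id A 2 hA.isSelfAdjoint, hA.eq, sq]
  rw [traceNorm_eq_re_trace_cfc_sqrt, hsq, ← cfc_comp' Real.sqrt (· ^ 2) A]
  simp [Real.sqrt_sq_eq_abs, hA.trace_cfc]

lemma PosSemidef.re_trace_mul_nonneg {A B : Matrix n n ℂ} (hA : A.PosSemidef)
    (hB : B.PosSemidef) : 0 ≤ (A * B).trace.re := by
  obtain ⟨C, rfl⟩ := CStarAlgebra.nonneg_iff_eq_star_mul_self.mp hA.nonneg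
  rw [mul_assoc, trace_mul_comm]
  exact (RCLike.nonneg_iff.mp (hB.mul_mul_conjTranspose_same C).trace_nonneg).1

lemma posSemidef_cfc {A : Matrix n n ℂ} {f : ℝ → ℝ} (hf : ∀ x, 0 ≤ f x) :
    (cfc f A).PosSemidef :=
  (cfc_nonneg fun x _ => hf x).posSemidef

lemma continuousOn_spectrum (A : Matrix n n ℂ) (f : ℝ → ℝ) : ContinuousOn f (spectrum ℝ A) :=
  A.finite_real_spectrum.continuousOn f

lemma traceNorm_sub_le {P Q : Matrix n n ℂ} (hP : P.PosSemidef) (hQ : Q.PosSemidef) :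
    traceNorm (P - Q) ≤ P.trace.re + Q.trace.re := by
  set M := P - Q
  have hM : M.IsHermitian := hP.1.sub hQ.1
  have hcont := continuousOn_spectrum M
  set S := cfc (fun x : ℝ => (SignType.sign x : ℝ)) M
  have hSM : traceNorm M = (S * M).trace.re := by
    nth_rw 2 [← cfc_id' ℝ M]
    rw [← cfc_mul _ _ M (hcont _) (hcont _), hM.trace_cfc, hM.traceNorm_eq_sum_abs_eigenvalues]
    simp [sign_mul_self]
  have hPS : 0 ≤ ((1 - S) * P).trace.re := by
    refine PosSemidef.re_trace_mul_nonneg ?_ hP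
    rw [← cfc_const_one ℝ M, ← cfc_sub _ _ M (hcont _) (hcont _)]
    exact posSemidef_cfc fun x => by cases SignType.sign x <;> norm_num
  have hQS : 0 ≤ ((1 + S) * Q).trace.re := by
    refine PosSemidef.re_trace_mul_nonneg ?_ hQ
    rw [← cfc_const_one ℝ M, ← cfc_add M _ _ (hcont _) (hcont _)]
    exact posSemidef_cfc fun x => by cases SignType.sign x <;> norm_num
  rw [sub_mul, one_mul, trace_sub, Complex.sub_re] at hPS
  rw [add_mul, one_mul, trace_add, Complex.add_re] at hQS
  rw [hSM, mul_sub, trace_sub, Complex.sub_re]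
  linarith

lemma IsHermitian.exists_posSemidef_sub_eq {A : Matrix n n ℂ} (hA : A.IsHermitian) :
    ∃ P Q : Matrix n n ℂ, P.PosSemidef ∧ Q.PosSemidef ∧ A = P - Q ∧
      P.trace.re + Q.trace.re = traceNorm A := by
  have hcont := continuousOn_spectrum A
  refine ⟨cfc (fun x => max x 0) A, cfc (fun x => max (-x) 0) A, posSemidef_cfc fun x => le_max_right _ _,
    posSemidef_cfc fun x => le_max_right _ _, ?_, ?_⟩
  · rw [← cfc_sub _ _ A (hcont _) (hcont _)]
    simp only [max_zero_sub_max_neg_zero_eq_self]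
    exact (cfc_id' ℝ A).symm
  · rw [hA.trace_cfc, hA.trace_cfc, hA.traceNorm_eq_sum_abs_eigenvalues, ← Complex.add_re,
      ← Finset.sum_add_distrib]
    simp [max_zero_add_max_neg_zero_eq_abs_self]

end Hermitian

def krausMap {ι : Type*} [Fintype ι] (E : ι → Matrix m n ℂ) (X : Matrix n n ℂ) :
    Matrix m m ℂ :=
  ∑ k, E k * X * (E k)ᴴ

section Kraus

variable {ι : Type*} [Fintype ι] (E : ι → Matrix m n ℂ)

lemma krausMap_sub (X Y : Matrix n n ℂ) : krausMap E (X - Y) = krausMap E X - krausMap E Y := by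
  simp only [krausMap, Matrix.mul_sub, Matrix.sub_mul, Finset.sum_sub_distrib]

variable [Fintype m]

lemma PosSemidef.krausMap {X : Matrix n n ℂ} (hX : X.PosSemidef) : (krausMap E X).PosSemidef :=
  posSemidef_sum _ fun k _ => hX.mul_mul_conjTranspose_same (E k)

lemma trace_krausMap [DecidableEq n] (hE : ∑ k, (E k)ᴴ * E k = 1) (X : Matrix n n ℂ) :
    (krausMap E X).trace = X.trace := by
  simp_rw [krausMap, trace_sum, trace_mul_cycle (E _), ← trace_sum, ← Finset.sum_mul, hE, one_mul]

lemma traceNorm_krausMap_le [DecidableEq m] [DecidableEq n] (hE : ∑ k, (E k)ᴴ * E k = 1)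
    {X : Matrix n n ℂ} (hX : X.IsHermitian) : traceNorm (krausMap E X) ≤ traceNorm X := by
  obtain ⟨P, Q, hP, hQ, rfl, hPQ⟩ := hX.exists_posSemidef_sub_eq
  rw [← hPQ, krausMap_sub, ← trace_krausMap E hE P, ← trace_krausMap E hE Q]
  exact traceNorm_sub_le (hP.krausMap E) (hQ.krausMap E)

end Kraus

end Matrix

/-- A CPTP map in Kraus form is a contraction for the trace distance. -/
theorem cptp_trace_distance_contraction {D : ℕ} {ι : Type*} [Fintype ι]
    (E : ι → Matrix (Fin D) (Fin D) ℂ)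
    (hE : ∑ k, (E k)ᴴ * E k = 1)
    (Φ : Matrix (Fin D) (Fin D) ℂ → Matrix (Fin D) (Fin D) ℂ)
    (hΦ : ∀ X, Φ X = ∑ k, E k * X * (E k)ᴴ)
    (ρ σ : Matrix (Fin D) (Fin D) ℂ)
    (hρ : IsDensity ρ) (hσ : IsDensity σ) :
    traceNorm (Φ ρ - Φ σ) ≤ traceNorm (ρ - σ) := by
  obtain rfl : Φ = krausMap E := funext hΦ
  rw [← krausMap_sub]
  exact traceNorm_krausMap_le E hE (hρ.1.1.sub hσ.1.1)
end

section
/- (Cross term of the quantum switch of two depolarizing channels.) Let D ≥ 1, 0 < q₁, q₂ ≤ 1, and let (U_i)_{i ∈ Fin D²} and (V_j)_{j ∈ Fin D²} be families of unitary D×D complex matrices with tr(U_iᴴU_j) = D·δ_{ij} and tr(V_iᴴV_j) = D·δ_{ij}. Define U₀ = (D√(1−q₁)/√q₁) • I and V₀ = (D√(1−q₂)/√q₂) • I. Then for every D×D complex matrix ρ: (q₁q₂/D⁴) · ∑_{i=0}^{D²} ∑_{j=0}^{D²} U_i V_j ρ U_iᴴ V_jᴴ = (q₁q₂/D²) • ρ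 + q₁(1−q₂)·tr(ρ) • (I/D) + q₂(1−q₁)·tr(ρ) • (I/D) + (1−q₁)(1−q₂) • ρ. -/
/-!
An orthogonal operator basis `W` with `tr (Wᵢᴴ Wⱼ) = c δᵢⱼ` satisfies the reconstruction identity
`∑ᵢ tr (Wᵢᴴ M) Wᵢ = c M`; read entrywise this is a completeness relation, which gives the twirl
`∑ᵢ Wᵢ M Wᵢᴴ = c tr M • 1`, and its adjoint is `∑ⱼ tr (Wⱼ M) Wⱼᴴ = c̄ M`.
Splitting the double sum over the extended index set, the two blocks with one scalar operator are
twirls, and in the block `∑ᵢⱼ Uᵢ Vⱼ ρ Uᵢᴴ Vⱼᴴ` twirling over `i` first turns `Uᵢ (Vⱼ ρ) Uᵢᴴ` into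
`D tr (Vⱼ ρ) • 1`, after which the adjoint reconstruction over `j` returns `D² ρ`.
-/

open Matrix

variable {n ι κ : Type*} [Fintype n] [Fintype ι] [Fintype κ]

def switchCrossTerm (A : ι → Matrix n n ℂ) (B : κ → Matrix n n ℂ)
    (ρ : Matrix n n ℂ) : Matrix n n ℂ :=
  ∑ i, ∑ j, A i * B j * ρ * (A i)ᴴ * (B j)ᴴ

variable [DecidableEq n]

theorem switchCrossTerm_option {U : ι → Matrix n n ℂ}
    {V : κ → Matrix n n ℂ} {eU : Option ι → Matrix n n ℂ} {eV : Option κ → Matrix n n ℂ}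
    {a b : ℂ} (heU0 : eU none = a • 1) (heU : ∀ i, eU (some i) = U i)
    (heV0 : eV none = b • 1) (heV : ∀ j, eV (some j) = V j) (ρ : Matrix n n ℂ) :
    switchCrossTerm eU eV ρ =
      (star a * a * (star b * b)) • ρ + (star a * a) • ∑ j, V j * ρ * (V j)ᴴ +
        (star b * b) • ∑ i, U i * ρ * (U i)ᴴ + switchCrossTerm U V ρ := by
  simp only [switchCrossTerm, Fintype.sum_option, Finset.sum_add_distrib, heU0, heU, heV0, heV,
    conjTranspose_smul, conjTranspose_one, Finset.smul_sum, Matrix.smul_mul, Matrix.mul_smul,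
    Matrix.one_mul, Matrix.mul_one, smul_smul]
  module

variable [DecidableEq ι]

structure IsOrthogonalOperatorBasis (W : ι → Matrix n n ℂ) (c : ℂ) : Prop where
  trace_conjTranspose_mul : ∀ i j, ((W i)ᴴ * W j).trace = if i = j then c else 0
  span_eq_top : Submodule.span ℂ (Set.range W) = ⊤

namespace IsOrthogonalOperatorBasis

variable {W : ι → Matrix n n ℂ} {c : ℂ}

theorem of_card_eq (hc : c ≠ 0)
    (horth : ∀ i j, ((W i)ᴴ * W j).trace = if i = j then c else 0)
    (hcard : Fintype.card ι = Fintype.card n ^ 2) : IsOrthogonalOperatorBasis W c := by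
  refine ⟨horth, LinearIndependent.span_eq_top_of_card_eq_finrank' ?_ ?_⟩
  · rw [Fintype.linearIndependent_iff]
    intro a ha j
    have h := congrArg (fun M => ((W j)ᴴ * M).trace) ha
    simpa [Matrix.mul_sum, trace_sum, horth, hc] using h
  · simp [hcard, Module.finrank_matrix, sq]

theorem sum_trace_conjTranspose_mul_smul (hW : IsOrthogonalOperatorBasis W c)
    (M : Matrix n n ℂ) :
    ∑ i, ((W i)ᴴ * M).trace • W i = c • M := by
  obtain ⟨a, rfl⟩ := (Submodule.mem_span_range_iff_exists_fun ℂ).mp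
    (hW.span_eq_top ▸ Submodule.mem_top : M ∈ Submodule.span ℂ (Set.range W))
  simp [Matrix.mul_sum, trace_sum, hW.trace_conjTranspose_mul, Finset.smul_sum, smul_smul,
    mul_comm]

theorem sum_star_mul_apply (hW : IsOrthogonalOperatorBasis W c) (p q r s : n) :
    ∑ i, star (W i p q) * W i r s = if p = r ∧ q = s then c else 0 := by
  have h := congrFun₂ (hW.sum_trace_conjTranspose_mul_smul (Matrix.single p q 1)) r s
  simpa [Matrix.sum_apply, trace, Matrix.mul_apply, Matrix.single_apply, ite_and] using h

theorem sum_mul_mul_conjTranspose (hW : IsOrthogonalOperatorBasis W c) (M : Matrix n n ℂ) :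
    ∑ i, W i * M * (W i)ᴴ = (c * M.trace) • 1 := by
  ext a b
  calc (∑ i, W i * M * (W i)ᴴ) a b
      = ∑ d, ∑ e, M e d * ∑ i, star (W i b d) * W i a e := by
        simp only [Matrix.sum_apply, Matrix.mul_apply, conjTranspose_apply, Finset.sum_mul,
          Finset.mul_sum]
        rw [Finset.sum_comm]
        refine Finset.sum_congr rfl fun d _ => ?_
        rw [Finset.sum_comm]
        refine Finset.sum_congr rfl fun e _ => ?_
        refine Finset.sum_congr rfl fun i _ => ?_
        ring
    _ = ∑ d, ∑ e, M e d * if b = a ∧ d = e then c else 0 := by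
        simp only [hW.sum_star_mul_apply]
    _ = ((c * M.trace) • (1 : Matrix n n ℂ)) a b := by
        by_cases hab : a = b <;> simp [hab, eq_comm, trace, Finset.mul_sum, mul_comm]

theorem sum_trace_mul_smul_conjTranspose (hW : IsOrthogonalOperatorBasis W c)
    (M : Matrix n n ℂ) :
    ∑ i, (W i * M).trace • (W i)ᴴ = star c • M := by
  have h := congrArg conjTranspose (hW.sum_trace_conjTranspose_mul_smul Mᴴ)
  simp only [conjTranspose_sum, conjTranspose_smul, conjTranspose_conjTranspose] at h
  rw [← h]
  refine Finset.sum_congr rfl fun i _ => ?_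
  rw [← trace_conjTranspose, conjTranspose_mul, conjTranspose_conjTranspose, trace_mul_comm]
  simp

theorem switchCrossTerm_eq [DecidableEq κ] {V : κ → Matrix n n ℂ} {d : ℂ}
    (hW : IsOrthogonalOperatorBasis W c) (hV : IsOrthogonalOperatorBasis V d)
    (ρ : Matrix n n ℂ) : switchCrossTerm W V ρ = (c * star d) • ρ :=
  calc _ = ∑ j, (∑ i, W i * (V j * ρ) * (W i)ᴴ) * (V j)ᴴ := by
        rw [switchCrossTerm, Finset.sum_comm]
        simp only [Finset.sum_mul, Matrix.mul_assoc]
    _ = c • ∑ j, (V j * ρ).trace • (V j)ᴴ := by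
        simp only [hW.sum_mul_mul_conjTranspose, Finset.smul_sum, smul_mul, Matrix.one_mul,
          mul_smul]
    _ = (c * star d) • ρ := by rw [hV.sum_trace_mul_smul_conjTranspose, smul_smul]

end IsOrthogonalOperatorBasis

theorem mul_sqrt_div_sqrt_mul_self {x q : ℝ} (hq0 : 0 < q) (hq1 : q ≤ 1) :
    x * √(1 - q) / √q * (x * √(1 - q) / √q) = x ^ 2 * (1 - q) / q := by
  rw [← sq, div_pow, mul_pow, Real.sq_sqrt (by linarith), Real.sq_sqrt hq0.le]

theorem depolarizing_switch_cross_term_general {D : ℕ}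
    (q₁ q₂ : ℝ) (hq₁0 : 0 < q₁) (hq₁1 : q₁ ≤ 1) (hq₂0 : 0 < q₂) (hq₂1 : q₂ ≤ 1)
    (U V : Fin (D ^ 2) → Matrix (Fin D) (Fin D) ℂ)
    (hUorth : ∀ i j, ((U i)ᴴ * U j).trace = if i = j then (D : ℂ) else 0)
    (hVorth : ∀ i j, ((V i)ᴴ * V j).trace = if i = j then (D : ℂ) else 0)
    (eU eV : Option (Fin (D ^ 2)) → Matrix (Fin D) (Fin D) ℂ)
    (heU0 : eU none = (((D : ℝ) * Real.sqrt (1 - q₁) / Real.sqrt q₁ : ℝ) : ℂ) •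
      (1 : Matrix (Fin D) (Fin D) ℂ))
    (heU : ∀ i, eU (some i) = U i)
    (heV0 : eV none = (((D : ℝ) * Real.sqrt (1 - q₂) / Real.sqrt q₂ : ℝ) : ℂ) •
      (1 : Matrix (Fin D) (Fin D) ℂ))
    (heV : ∀ j, eV (some j) = V j)
    (ρ : Matrix (Fin D) (Fin D) ℂ) :
    ((q₁ * q₂ / (D : ℝ) ^ 4 : ℝ) : ℂ) •
        ∑ i : Option (Fin (D ^ 2)), ∑ j : Option (Fin (D ^ 2)),
          eU i * eV j * ρ * (eU i)ᴴ * (eV j)ᴴ =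
      ((q₁ * q₂ / (D : ℝ) ^ 2 : ℝ) : ℂ) • ρ +
        (((q₁ * (1 - q₂) : ℝ) : ℂ) * ρ.trace / (D : ℂ)) •
          (1 : Matrix (Fin D) (Fin D) ℂ) +
        (((q₂ * (1 - q₁) : ℝ) : ℂ) * ρ.trace / (D : ℂ)) •
          (1 : Matrix (Fin D) (Fin D) ℂ) +
        (((1 - q₁) * (1 - q₂) : ℝ) : ℂ) • ρ := by
  rcases Nat.eq_zero_or_pos D with rfl | hD
  · exact Subsingleton.elim _ _
  have hD₀ : (D : ℂ) ≠ 0 := by exact_mod_cast hD.ne'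
  have hU := IsOrthogonalOperatorBasis.of_card_eq hD₀ hUorth (by simp)
  have hV := IsOrthogonalOperatorBasis.of_card_eq hD₀ hVorth (by simp)
  change _ • switchCrossTerm eU eV ρ = _
  rw [switchCrossTerm_option heU0 heU heV0 heV, hU.sum_mul_mul_conjTranspose,
    hV.sum_mul_mul_conjTranspose, hU.switchCrossTerm_eq hV]
  simp only [Complex.star_def, Complex.conj_ofReal, map_natCast, ← Complex.ofReal_mul,
    mul_sqrt_div_sqrt_mul_self hq₁0 hq₁1, mul_sqrt_div_sqrt_mul_self hq₂0 hq₂1]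
  have hq₁ : (q₁ : ℂ) ≠ 0 := by exact_mod_cast hq₁0.ne'
  have hq₂ : (q₂ : ℂ) ≠ 0 := by exact_mod_cast hq₂0.ne'
  match_scalars <;> field_simp <;> ring

/-- Cross (coherence) term of the quantum switch of two depolarizing channels. -/
theorem depolarizing_switch_cross_term {D : ℕ} (hD : 1 ≤ D)
    (q₁ q₂ : ℝ) (hq₁0 : 0 < q₁) (hq₁1 : q₁ ≤ 1) (hq₂0 : 0 < q₂) (hq₂1 : q₂ ≤ 1)
    (U V : Fin (D ^ 2) → Matrix (Fin D) (Fin D) ℂ)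
    (hUunit : ∀ i, (U i)ᴴ * U i = 1) (hVunit : ∀ j, (V j)ᴴ * V j = 1)
    (hUorth : ∀ i j, ((U i)ᴴ * U j).trace = if i = j then (D : ℂ) else 0)
    (hVorth : ∀ i j, ((V i)ᴴ * V j).trace = if i = j then (D : ℂ) else 0)
    (eU eV : Option (Fin (D ^ 2)) → Matrix (Fin D) (Fin D) ℂ)
    (heU0 : eU none = (((D : ℝ) * Real.sqrt (1 - q₁) / Real.sqrt q₁ : ℝ) : ℂ) •
      (1 : Matrix (Fin D) (Fin D) ℂ))
    (heU : ∀ i, eU (some i) = U i)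
    (heV0 : eV none = (((D : ℝ) * Real.sqrt (1 - q₂) / Real.sqrt q₂ : ℝ) : ℂ) •
      (1 : Matrix (Fin D) (Fin D) ℂ))
    (heV : ∀ j, eV (some j) = V j)
    (ρ : Matrix (Fin D) (Fin D) ℂ) :
    ((q₁ * q₂ / (D : ℝ) ^ 4 : ℝ) : ℂ) •
        ∑ i : Option (Fin (D ^ 2)), ∑ j : Option (Fin (D ^ 2)),
          eU i * eV j * ρ * (eU i)ᴴ * (eV j)ᴴ =
      ((q₁ * q₂ / (D : ℝ) ^ 2 : ℝ) : ℂ) • ρ +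
        (((q₁ * (1 - q₂) : ℝ) : ℂ) * ρ.trace / (D : ℂ)) •
          (1 : Matrix (Fin D) (Fin D) ℂ) +
        (((q₂ * (1 - q₁) : ℝ) : ℂ) * ρ.trace / (D : ℂ)) •
          (1 : Matrix (Fin D) (Fin D) ℂ) +
        (((1 - q₁) * (1 - q₂) : ℝ) : ℂ) • ρ :=
  depolarizing_switch_cross_term_general q₁ q₂ hq₁0 hq₁1 hq₂0 hq₂1 U V hUorth hVorth eU eV heU0 heU
    heV0 heV ρ
end
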